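/- Let E be the ellipse {q₁²/a² + q₂²/b² ≤ 1} with 0 < b ≤ a, written as AE = B for the diagonal matrix A = diag(1/a, 1/b) and B the Euclidean unit disk. Let C = {q₁²/(a²-λ) + q₂²/(b²-λ) ≤ 1} with 0 < λ < b² be a confocal ellipse. For q ∈ ∂E and unit p, the line q + ℝp is tangent to C if and only if the line p + ℝn, with n = (q₁/a², q₂/b²), is tangent to AC = {a²p₁²/(a²-λ) + b²p₂²/(b²-λ) ≤ 1}. -/

import Mathlib

open MeasureTheory Set Pointwise Filter
open scoped RealInnerProductSpace

noncomputable section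

abbrev E2 := EuclideanSpace ℝ (Fin 2)

/-- Mixed area of two planar convex bodies, via `area(A+B) = area A + 2 V(A,B) + area B`. -/
def mixedArea (A B : Set E2) : ℝ :=
  ((volume (A + B)).toReal - (volume A).toReal - (volume B).toReal) / 2

/-- Counterclockwise rotation by 90 degrees. -/
def Jrot (v : E2) : E2 := WithLp.toLp 2 ![-(v 1), v 0]

/-- The `h_T`-perimeter of a planar convex body `D`: twice the mixed area of `D`
with `T` rotated by 90 degrees. -/
def minkPer (T D : Set E2) : ℝ := 2 * mixedArea D (Jrot '' T)

/-- Support function of `T`. -/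
def suppFn (T : Set E2) (u : E2) : ℝ := sSup ((fun x => ⟪x, u⟫) '' T)

/-- A convex body is `C¹`-smooth iff at every boundary point there is a unique
unit outer normal. -/
def SmoothBody (K : Set E2) : Prop :=
  ∀ q ∈ frontier K, ∃! u : E2, ‖u‖ = 1 ∧ ∀ y ∈ K, ⟪y - q, u⟫ ≤ 0
lemma quadUnique (A B C : ℝ) (hA : A ≠ 0) :
    (∃! t : ℝ, A * t ^ 2 + B * t + C = 0) ↔ discrim A B C = 0 := by
  have hform : ∀ t : ℝ, A * t ^ 2 + B * t + C = A * (t * t) + B * t + C := by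
    intro t; ring
  constructor
  · rintro ⟨t, ht, hu⟩
    rw [hform] at ht
    have h := (quadratic_eq_zero_iff_discrim_eq_sq hA t).mp ht
    by_contra hd
    have hs : 2 * A * t + B ≠ 0 := by
      intro h0
      exact hd (by rw [h, h0]; ring)
    have h2A : (2 * A) ≠ 0 := mul_ne_zero two_ne_zero hA
    have ht' : A * ((-B - (2 * A * t + B)) / (2 * A)) ^ 2
        + B * ((-B - (2 * A * t + B)) / (2 * A)) + C = 0 := by
      rw [hform, quadratic_eq_zero_iff_discrim_eq_sq hA, h]
      field_simp
      ring
    have h1 := hu _ ht'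
    rw [div_eq_iff h2A] at h1
    exact hs (by linear_combination (-1/2 : ℝ) * h1)
  · intro hd
    refine ⟨-B / (2 * A), ?_, ?_⟩
    · show A * (-B / (2 * A)) ^ 2 + B * (-B / (2 * A)) + C = 0
      rw [hform]
      exact (quadratic_eq_zero_iff_of_discrim_eq_zero hA hd _).mpr rfl
    · intro y hy
      rw [hform] at hy
      exact (quadratic_eq_zero_iff_of_discrim_eq_zero hA hd y).mp hy


set_option maxHeartbeats 1000000 in
/-- The line `q + ℝp` is tangent to the confocal ellipse `C` iff the dual line
`p + ℝn` is tangent to `AC`, expressed through uniqueness of the intersection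
parameter. -/
theorem stmt9 (a b lam q1 q2 p1 p2 : ℝ)
    (hb : 0 < b) (hba : b ≤ a) (hlam0 : 0 < lam) (hlamb : lam < b ^ 2)
    (hq : q1 ^ 2 / a ^ 2 + q2 ^ 2 / b ^ 2 = 1) (hp : p1 ^ 2 + p2 ^ 2 = 1) :
    (∃! t : ℝ, (q1 + t * p1) ^ 2 / (a ^ 2 - lam) + (q2 + t * p2) ^ 2 / (b ^ 2 - lam) = 1) ↔
      (∃! t : ℝ, a ^ 2 * (p1 + t * q1 / a ^ 2) ^ 2 / (a ^ 2 - lam) +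
        b ^ 2 * (p2 + t * q2 / b ^ 2) ^ 2 / (b ^ 2 - lam) = 1) := by
  have ha : 0 < a := lt_of_lt_of_le hb hba
  have hb2a2 : b ^ 2 ≤ a ^ 2 := by nlinarith
  have hα : 0 < a ^ 2 - lam := by nlinarith
  have hβ : 0 < b ^ 2 - lam := by nlinarith
  have ha0 : a ≠ 0 := ha.ne'
  have hb0 : b ≠ 0 := hb.ne'
  have hα0 : a ^ 2 - lam ≠ 0 := hα.ne'
  have hβ0 : b ^ 2 - lam ≠ 0 := hβ.ne'
  set A1 : ℝ := p1 ^ 2 / (a ^ 2 - lam) + p2 ^ 2 / (b ^ 2 - lam) with hA1def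
  set B0 : ℝ := 2 * (q1 * p1 / (a ^ 2 - lam) + q2 * p2 / (b ^ 2 - lam)) with hB0def
  set C1 : ℝ := q1 ^ 2 / (a ^ 2 - lam) + q2 ^ 2 / (b ^ 2 - lam) - 1 with hC1def
  set A2 : ℝ := q1 ^ 2 / (a ^ 2 * (a ^ 2 - lam)) + q2 ^ 2 / (b ^ 2 * (b ^ 2 - lam)) with hA2def
  set C2 : ℝ := a ^ 2 * p1 ^ 2 / (a ^ 2 - lam) + b ^ 2 * p2 ^ 2 / (b ^ 2 - lam) - 1 with hC2def
  have hq' : q1 ^ 2 * b ^ 2 + q2 ^ 2 * a ^ 2 = a ^ 2 * b ^ 2 := by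
    field_simp at hq
    linarith
  have hA1 : 0 < A1 := by
    rw [hA1def, div_add_div _ _ hα0 hβ0]
    apply div_pos ?_ (mul_pos hα hβ)
    nlinarith [sq_nonneg p1, sq_nonneg p2]
  have hA2 : 0 < A2 := by
    rw [hA2def, div_add_div _ _ (by positivity) (by positivity)]
    apply div_pos ?_ (by positivity)
    have hab : (0:ℝ) < a ^ 2 * b ^ 2 * (b ^ 2 - lam) := by positivity
    nlinarith [sq_nonneg q1, sq_nonneg q2, hq', hab,
      mul_nonneg (mul_nonneg (sq_nonneg q2) (sq_nonneg a)) (sub_nonneg.mpr hb2a2)]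
  have h1 : ∀ t : ℝ,
      ((q1 + t * p1) ^ 2 / (a ^ 2 - lam) + (q2 + t * p2) ^ 2 / (b ^ 2 - lam) = 1) ↔
        A1 * t ^ 2 + B0 * t + C1 = 0 := by
    intro t
    rw [hA1def, hB0def, hC1def]
    constructor <;> intro h <;> linear_combination h
  have e2 : ∀ t : ℝ,
      a ^ 2 * (p1 + t * q1 / a ^ 2) ^ 2 / (a ^ 2 - lam) +
        b ^ 2 * (p2 + t * q2 / b ^ 2) ^ 2 / (b ^ 2 - lam) - 1 =
      A2 * t ^ 2 + B0 * t + C2 := by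
    intro t
    rw [hA2def, hB0def, hC2def]
    field_simp
    ring
  have h2 : ∀ t : ℝ,
      (a ^ 2 * (p1 + t * q1 / a ^ 2) ^ 2 / (a ^ 2 - lam) +
        b ^ 2 * (p2 + t * q2 / b ^ 2) ^ 2 / (b ^ 2 - lam) = 1) ↔
        A2 * t ^ 2 + B0 * t + C2 = 0 := by
    intro t
    rw [← e2 t, sub_eq_zero]
  rw [existsUnique_congr h1, existsUnique_congr h2,
    quadUnique _ _ _ hA1.ne', quadUnique _ _ _ hA2.ne']
  have hC1' : C1 = lam * A2 := by
    rw [hC1def, hA2def, ← hq]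
    field_simp
    ring
  have hC2' : C2 = lam * A1 := by
    rw [hC2def, hA1def, ← hp]
    field_simp
    ring
  have : discrim A1 B0 C1 = discrim A2 B0 C2 := by
    simp only [discrim, hC1', hC2']
    ring
  rw [this]
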